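/- Let R be a reduced crystallographic root system with base Π and β ∈ Π. Let σ⁺_β be half the sum of the positive roots whose coefficient on β is ≥ 1. Then 2σ⁺_β is an integer multiple of the fundamental weight Λ_β: namely 2σ⁺_β = k_β Λ_β where k_β = ⟨2σ⁺_β, β∨⟩. Equivalently, ⟨2σ⁺_β, α∨⟩ = 0 for every simple root α ≠ β. -/

import Mathlib

open scoped RealInnerProductSpace

/-- `β` is a nonnegative linear combination of the elements of `Δ`. -/
def IsPosComb {V : Type*} [AddCommGroup V] [Module ℝ V] (Δ : Finset V) (β : V) : Prop :=
  ∃ c : V → ℝ, (∀ a ∈ Δ, 0 ≤ c a) ∧ β = ∑ a ∈ Δ, c a • a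

/-- A reduced crystallographic root system in a Euclidean vector space. -/
structure IsReducedCrystRootSystem {V : Type*} [NormedAddCommGroup V] [InnerProductSpace ℝ V]
    (R : Finset V) : Prop where
  nonzero : ∀ α ∈ R, α ≠ 0
  span_top : Submodule.span ℝ (R : Set V) = ⊤
  crystallographic : ∀ α ∈ R, ∀ β ∈ R, ∃ n : ℤ, (n : ℝ) = 2 * ⟪β, α⟫ / ⟪α, α⟫
  reflection_mem : ∀ α ∈ R, ∀ β ∈ R, β - (2 * ⟪β, α⟫ / ⟪α, α⟫) • α ∈ R
  reduced : ∀ α ∈ R, ∀ c : ℝ, c • α ∈ R → c = 1 ∨ c = -1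

/-- `Δ` is a base (a system of simple roots) of the root system `R`. -/
structure IsBase {V : Type*} [NormedAddCommGroup V] [InnerProductSpace ℝ V]
    (R Δ : Finset V) : Prop where
  subset : Δ ⊆ R
  indep : LinearIndependent ℝ (fun x : (Δ : Set V) => (x.1 : V))
  pos_or_neg : ∀ β ∈ R, IsPosComb Δ β ∨ IsPosComb Δ (-β)

/-!
The reflection `s_α` in a simple root `α ≠ β` changes only the `α`-coefficient of a root, so it
preserves the `β`-coefficient. A root with a positive `β`-coefficient is positive, hence `s_α`
permutes the positive roots whose `β`-coefficient is at least `1`. Their sum `2σ⁺_β` is therefore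
fixed by `s_α`, i.e. `⟨2σ⁺_β, α∨⟩ = 0`.
-/

theorem LinearIndependent.finset_coeff_eq {K M : Type*} [Ring K] [AddCommGroup M] [Module K M]
    {Δ : Finset M} (hΔ : LinearIndependent K (fun x : (Δ : Set M) => (x.1 : M)))
    {c d : M → K} (h : ∑ a ∈ Δ, c a • a = ∑ a ∈ Δ, d a • a) {a : M} (ha : a ∈ Δ) :
    c a = d a :=
  hΔ.eq_coords_of_eq (f := fun x => c x.1) (g := fun x => d x.1)
    ((Finset.sum_coe_sort Δ (fun a => c a • a)).trans
      (h.trans (Finset.sum_coe_sort Δ (fun a => d a • a)).symm)) ⟨a, ha⟩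

section RootReflection

variable {V : Type*} [NormedAddCommGroup V] [InnerProductSpace ℝ V]

/-- For `α = 0` this is the identity, since `0 / 0 = 0`. -/
noncomputable def rootReflection (α : V) : V →ₗ[ℝ] V where
  toFun γ := γ - (2 * ⟪γ, α⟫ / ⟪α, α⟫) • α
  map_add' x y := by simp only [inner_add_left, mul_add, add_div, add_smul]; abel
  map_smul' r x := by
    simp only [real_inner_smul_left, RingHom.id_apply, smul_sub, smul_smul]
    congr 2
    ring

theorem rootReflection_apply (α γ : V) :
    rootReflection α γ = γ - (2 * ⟪γ, α⟫ / ⟪α, α⟫) • α :=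
  rfl

theorem rootReflection_eq_self_iff (α γ : V) :
    rootReflection α γ = γ ↔ 2 * ⟪γ, α⟫ / ⟪α, α⟫ = 0 := by
  rw [rootReflection_apply, sub_eq_self, smul_eq_zero, or_iff_left_iff_imp]
  rintro rfl
  simp

theorem coroot_rootReflection (α γ : V) :
    2 * ⟪rootReflection α γ, α⟫ / ⟪α, α⟫ = -(2 * ⟪γ, α⟫ / ⟪α, α⟫) := by
  by_cases hαα : ⟪α, α⟫ = 0
  · rw [hαα, div_zero, div_zero, neg_zero]
  rw [rootReflection_apply, inner_sub_left, real_inner_smul_left]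
  field_simp
  ring

theorem rootReflection_involutive (α : V) : Function.Involutive (rootReflection α) := by
  intro γ
  rw [rootReflection_apply α (rootReflection α γ), coroot_rootReflection, neg_smul,
    sub_neg_eq_add, rootReflection_apply, sub_add_cancel]

theorem Finset.coroot_sum_eq_zero_of_rootReflection_mem (α : V) (S : Finset V)
    (hS : ∀ γ ∈ S, rootReflection α γ ∈ S) :
    2 * ⟪∑ γ ∈ S, γ, α⟫ / ⟪α, α⟫ = 0 := by
  rw [← rootReflection_eq_self_iff, map_sum]
  exact Finset.sum_nbij' _ _ hS hS (fun γ _ => rootReflection_involutive α γ)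
    (fun γ _ => rootReflection_involutive α γ) (fun _ _ => rfl)

end RootReflection

section Base

variable {V : Type*} [NormedAddCommGroup V] [InnerProductSpace ℝ V] {R Δ : Finset V}
  {coeff : V → V → ℝ}

theorem IsBase.isPosComb_of_coeff_pos (hΔ : IsBase R Δ)
    (hcoeff : ∀ γ ∈ R, γ = ∑ a ∈ Δ, coeff γ a • a) {γ : V} (hγ : γ ∈ R) {b : V} (hb : b ∈ Δ)
    (hpos : 0 < coeff γ b) : IsPosComb Δ γ := by
  refine (hΔ.pos_or_neg γ hγ).resolve_right ?_
  rintro ⟨c, hc, hneg⟩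
  have hcoeff_neg : coeff γ b = -c b := by
    refine hΔ.indep.finset_coeff_eq (d := fun a => -c a) ?_ hb
    simp only [neg_smul, Finset.sum_neg_distrib, ← hneg, neg_neg, ← hcoeff γ hγ]
  linarith [hc b hb]

theorem coeff_rootReflection (hΔ : LinearIndependent ℝ (fun x : (Δ : Set V) => (x.1 : V)))
    (hcoeff : ∀ γ ∈ R, γ = ∑ a ∈ Δ, coeff γ a • a) {α : V} (hα : α ∈ Δ) {γ : V} (hγ : γ ∈ R)
    (hsγ : rootReflection α γ ∈ R) {b : V} (hb : b ∈ Δ) (hbα : b ≠ α) :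
    coeff (rootReflection α γ) b = coeff γ b := by
  classical
  have hcoeff_sγ := hΔ.finset_coeff_eq (c := coeff (rootReflection α γ))
    (d := fun a => coeff γ a - if a = α then 2 * ⟪γ, α⟫ / ⟪α, α⟫ else 0) ?_ hb
  · simpa only [if_neg hbα, sub_zero] using hcoeff_sγ
  rw [← hcoeff _ hsγ, rootReflection_apply]
  simp only [sub_smul, Finset.sum_sub_distrib, ite_smul, zero_smul, Finset.sum_ite_eq', if_pos hα,
    ← hcoeff γ hγ]

theorem rootReflection_mem_of_one_le_coeff (hR : IsReducedCrystRootSystem R) (hΔ : IsBase R Δ)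
    (hcoeff : ∀ γ ∈ R, γ = ∑ a ∈ Δ, coeff γ a • a) {α β : V} (hα : α ∈ Δ) (hβ : β ∈ Δ)
    (hαβ : α ≠ β) {γ : V} (hγ : γ ∈ R) (hγβ : 1 ≤ coeff γ β) :
    (rootReflection α γ ∈ R ∧ IsPosComb Δ (rootReflection α γ)) ∧
      1 ≤ coeff (rootReflection α γ) β := by
  have hsγ : rootReflection α γ ∈ R := hR.reflection_mem α (hΔ.subset hα) γ hγ
  have hsγβ := coeff_rootReflection hΔ.indep hcoeff hα hγ hsγ hβ hαβ.symm
  exact ⟨⟨hsγ, hΔ.isPosComb_of_coeff_pos hcoeff hsγ hβ (by linarith)⟩, hsγβ ▸ hγβ⟩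

end Base

theorem two_sigma_plus_is_multiple_of_fundamental_weight_general
    {V : Type*} [NormedAddCommGroup V] [InnerProductSpace ℝ V]
    (R Δ : Finset V)
    (hR : IsReducedCrystRootSystem R) (hΔ : IsBase R Δ)
    (β : V) (hβ : β ∈ Δ)
    (coeff : V → V → ℝ)
    (hcoeff : ∀ γ ∈ R, γ = ∑ a ∈ Δ, coeff γ a • a)
    (σplus : V)
    (hσplus : σplus = (2⁻¹ : ℝ) •
      ∑ γ ∈ @Finset.filter V (fun γ => 1 ≤ coeff γ β) (Classical.decPred _)
          (@Finset.filter V (IsPosComb Δ) (Classical.decPred _) R), γ) :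
    ∀ α ∈ Δ, α ≠ β → 2 * ⟪(2 : ℝ) • σplus, α⟫ / ⟪α, α⟫ = 0 := by
  intro α hα hαβ
  rw [hσplus, smul_smul, mul_inv_cancel₀ two_ne_zero, one_smul]
  refine Finset.coroot_sum_eq_zero_of_rootReflection_mem α _ fun γ hγ => ?_
  simp only [Finset.mem_filter] at hγ ⊢
  exact rootReflection_mem_of_one_le_coeff hR hΔ hcoeff hα hβ hαβ hγ.1.1 hγ.2

/-- Let `β` be a simple root and `σplus` half the sum of the positive roots whose
coefficient on `β` is `≥ 1`.  Then `2σplus` is the multiple `k_β Λ_β` of the fundamental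
weight `Λ_β` with `k_β = ⟨2σplus, β∨⟩`; equivalently, `⟨2σplus, α∨⟩ = 0` for every simple
root `α ≠ β`. -/
theorem two_sigma_plus_is_multiple_of_fundamental_weight
    {V : Type*} [NormedAddCommGroup V] [InnerProductSpace ℝ V] [FiniteDimensional ℝ V]
    (R Δ : Finset V)
    (hR : IsReducedCrystRootSystem R) (hΔ : IsBase R Δ)
    (β : V) (hβ : β ∈ Δ)
    (coeff : V → V → ℝ)
    (hcoeff : ∀ γ ∈ R, γ = ∑ a ∈ Δ, coeff γ a • a)
    (σplus : V)
    (hσplus : σplus = (2⁻¹ : ℝ) •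
      ∑ γ ∈ @Finset.filter V (fun γ => 1 ≤ coeff γ β) (Classical.decPred _)
          (@Finset.filter V (IsPosComb Δ) (Classical.decPred _) R), γ) :
    ∀ α ∈ Δ, α ≠ β → 2 * ⟪(2 : ℝ) • σplus, α⟫ / ⟪α, α⟫ = 0 :=
  two_sigma_plus_is_multiple_of_fundamental_weight_general R Δ hR hΔ β hβ coeff hcoeff σplus hσplus
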